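/- Let T ⊂ ℝ³ be the tetrahedron with vertices (1,1,1), (−1,−1,1), (−1,1,−1), (1,−1,−1), and let G be the group of the 12 proper rotations of ℝ³ leaving T invariant (generated by R₁ with rows (0,1,0),(0,0,1),(1,0,0) and R₂ = diag(−1,1,−1)). For x ∈ T \ {0}, define Q(f;x) = w₁(x)·(Σ_{R ∈ G} f(Rx) − 12 f(0)) + (8/3)·f(0), where w₁(x) = 2/(15|x|²), and let P(x) = (5/8)|x|² be a probability density on T. Then P is indeed a probability density on T (∫_T P(x) dx = 1), and for every continuous f: cl T → ℝ, ∫_T Q(f;x) P(x) dx = ∫_T f(y) dy. -/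

import Mathlib

open MeasureTheory

/-- The tetrahedron with vertices `(1,1,1)`, `(−1,−1,1)`, `(−1,1,−1)`, `(1,−1,−1)`. -/
noncomputable def tetT : Set (EuclideanSpace ℝ (Fin 3)) :=
  convexHull ℝ {(!₂[1, 1, 1] : EuclideanSpace ℝ (Fin 3)),
    (!₂[-1, -1, 1] : EuclideanSpace ℝ (Fin 3)),
    (!₂[-1, 1, -1] : EuclideanSpace ℝ (Fin 3)),
    (!₂[1, -1, -1] : EuclideanSpace ℝ (Fin 3))}

/-- The generator `R₁` (a cyclic coordinate rotation) of the rotation group of `tetT`. -/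
def tetR₁ : Matrix (Fin 3) (Fin 3) ℝ := !![0, 1, 0; 0, 0, 1; 1, 0, 0]

/-- The generator `R₂ = diag(−1,1,−1)` of the rotation group of `tetT`. -/
def tetR₂ : Matrix (Fin 3) (Fin 3) ℝ := !![-1, 0, 0; 0, 1, 0; 0, 0, -1]

/-- An enumeration of the group `G` of the 12 proper rotations leaving `tetT`
invariant, generated by `tetR₁` and `tetR₂`. -/
noncomputable def tetG : Fin 12 → Matrix (Fin 3) (Fin 3) ℝ :=
  ![1, tetR₁, tetR₁ ^ 2, tetR₂, tetR₁ * tetR₂, tetR₂ * tetR₁,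
    tetR₁ ^ 2 * tetR₂, tetR₂ * tetR₁ ^ 2, tetR₁ * tetR₂ * tetR₁ ^ 2,
    tetR₁ ^ 2 * tetR₂ * tetR₁, tetR₂ * tetR₁ * tetR₂, tetR₂ * tetR₁ ^ 2 * tetR₂]

/-- The stochastic order-2 quadrature rule `P₂^tet` on the tetrahedron. -/
noncomputable def tetQ2 (f : EuclideanSpace ℝ (Fin 3) → ℝ)
    (x : EuclideanSpace ℝ (Fin 3)) : ℝ :=
  (2 / (15 * ‖x‖ ^ 2)) *
      ((∑ i : Fin 12, f (Matrix.toEuclideanLin (tetG i) x)) - 12 * f 0) +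
    (8 / 3) * f 0

/-- The sampling density `P(x) = (5/8)|x|²` on the tetrahedron. -/
noncomputable def tetP (x : EuclideanSpace ℝ (Fin 3)) : ℝ := (5 / 8) * ‖x‖ ^ 2

/-! ### Auxiliary material -/

open Set Matrix

section Aux

noncomputable section

local notation "E3" => EuclideanSpace ℝ (Fin 3)

/-- Half-space description of the tetrahedron. -/
def tetTdesc : Set (EuclideanSpace ℝ (Fin 3)) :=
  {x | x 0 + x 1 - x 2 ≤ 1 ∧ x 0 - x 1 + x 2 ≤ 1 ∧ -x 0 + x 1 + x 2 ≤ 1 ∧ -x 0 - x 1 - x 2 ≤ 1}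

def tetVert : Fin 4 → EuclideanSpace ℝ (Fin 3) :=
  ![!₂[1, 1, 1], !₂[-1, -1, 1], !₂[-1, 1, -1], !₂[1, -1, -1]]

lemma tetTdesc_subset : tetTdesc ⊆ tetT := by
  intro x h
  obtain ⟨h1, h2, h3, h4⟩ := h
  set w : Fin 4 → ℝ := ![(1 + (x 0 + x 1 + x 2))/4, (1 + (-x 0 - x 1 + x 2))/4,
    (1 + (-x 0 + x 1 - x 2))/4, (1 + (x 0 - x 1 - x 2))/4] with hw
  have hx : x = ∑ i, w i • tetVert i := by
    ext j
    fin_cases j <;>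
      simp [hw, tetVert, Fin.sum_univ_four, EuclideanSpace] <;> ring
  rw [hx]
  unfold tetT
  refine (convex_convexHull ℝ _).sum_mem (fun i _ => ?_) ?_ (fun i _ => subset_convexHull ℝ _ ?_)
  · fin_cases i <;> simp [hw] <;> linarith
  · simp [hw, Fin.sum_univ_four]; ring
  · fin_cases i <;> simp [tetVert, tetT]

lemma convex_tetTdesc : Convex ℝ tetTdesc := by
  have : tetTdesc = {x : EuclideanSpace ℝ (Fin 3) | x 0 + x 1 - x 2 ≤ 1} ∩
      ({x | x 0 - x 1 + x 2 ≤ 1} ∩ ({x | -x 0 + x 1 + x 2 ≤ 1} ∩ {x | -x 0 - x 1 - x 2 ≤ 1})) := by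
    ext x; simp [tetTdesc, Set.mem_setOf_eq]
  rw [this]
  refine (convex_halfSpace_le ?_ _).inter ((convex_halfSpace_le ?_ _).inter
    ((convex_halfSpace_le ?_ _).inter (convex_halfSpace_le ?_ _))) <;>
    constructor <;> intros <;> simp [EuclideanSpace] <;> ring

lemma tetT_subset : tetT ⊆ tetTdesc := by
  unfold tetT
  refine convexHull_min ?_ convex_tetTdesc
  intro y hy
  simp only [Set.mem_insert_iff, Set.mem_singleton_iff] at hy
  rcases hy with h | h | h | h <;> subst h <;>
    refine ⟨by norm_num [Matrix.cons_val_two], by norm_num [Matrix.cons_val_two], by norm_num [Matrix.cons_val_two], by norm_num [Matrix.cons_val_two]⟩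

lemma tetT_eq : tetT = tetTdesc := le_antisymm tetT_subset tetTdesc_subset

lemma tetT_compact : IsCompact tetT := by
  exact Set.Finite.isCompact_convexHull ℝ (Set.toFinite _)

lemma tetT_closed : IsClosed tetT := tetT_compact.isClosed

lemma tetT_meas : MeasurableSet tetT := tetT_closed.measurableSet

lemma closure_tetT : closure tetT = tetT := tetT_closed.closure_eq

/-! ### Linear maps from matrices, measure preservation -/

/-- linear equiv from a matrix with explicit two-sided inverse -/
def tetMatEquiv (A B : Matrix (Fin 3) (Fin 3) ℝ) (h1 : A * B = 1) (h2 : B * A = 1) :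
    EuclideanSpace ℝ (Fin 3) ≃ₗ[ℝ] EuclideanSpace ℝ (Fin 3) :=
  { toEuclideanLin A with
    invFun := toEuclideanLin B
    left_inv := fun x => by
      have h := Matrix.toLin_mul (PiLp.basisFun 2 ℝ (Fin 3)) (PiLp.basisFun 2 ℝ (Fin 3))
        (PiLp.basisFun 2 ℝ (Fin 3)) B A
      rw [h2] at h
      simpa [toEuclideanLin_eq_toLin] using (LinearMap.congr_fun h.symm x)
    right_inv := fun x => by
      have h := Matrix.toLin_mul (PiLp.basisFun 2 ℝ (Fin 3)) (PiLp.basisFun 2 ℝ (Fin 3))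
        (PiLp.basisFun 2 ℝ (Fin 3)) A B
      rw [h1] at h
      simpa [toEuclideanLin_eq_toLin] using (LinearMap.congr_fun h.symm x) }

def tetMatMeasEquiv (A B : Matrix (Fin 3) (Fin 3) ℝ) (h1 : A * B = 1) (h2 : B * A = 1) :
    EuclideanSpace ℝ (Fin 3) ≃ᵐ EuclideanSpace ℝ (Fin 3) :=
  (tetMatEquiv A B h1 h2).toContinuousLinearEquiv.toHomeomorph.toMeasurableEquiv

lemma tet_det_toEuclideanLin (A : Matrix (Fin 3) (Fin 3) ℝ) :
    LinearMap.det (toEuclideanLin A) = A.det := by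
  rw [toEuclideanLin_eq_toLin]; exact LinearMap.det_toLin _ _

lemma tet_measurePreserving_mat (A B : Matrix (Fin 3) (Fin 3) ℝ) (h1 : A * B = 1)
    (h2 : B * A = 1) (hdet : |A.det| = 1) :
    MeasurePreserving (tetMatMeasEquiv A B h1 h2)
      (volume : Measure (EuclideanSpace ℝ (Fin 3))) volume := by
  refine ⟨(tetMatMeasEquiv A B h1 h2).measurable, ?_⟩
  have hd : LinearMap.det (toEuclideanLin A) ≠ 0 := by
    rw [tet_det_toEuclideanLin]; intro h; rw [h] at hdet; simp at hdet
  have hco : (tetMatMeasEquiv A B h1 h2 : EuclideanSpace ℝ (Fin 3) → EuclideanSpace ℝ (Fin 3))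
      = (toEuclideanLin A : EuclideanSpace ℝ (Fin 3) →ₗ[ℝ] EuclideanSpace ℝ (Fin 3)) := rfl
  rw [hco, Measure.map_linearMap_addHaar_eq_smul_addHaar _ hd, tet_det_toEuclideanLin,
    abs_inv, hdet]
  simp

/-- the key set-integral identity -/
lemma tet_setIntegral_mat (A B : Matrix (Fin 3) (Fin 3) ℝ) (h1 : A * B = 1) (h2 : B * A = 1)
    (hdet : |A.det| = 1) (s : Set (EuclideanSpace ℝ (Fin 3)))
    (hs : (⇑(toEuclideanLin A)) ⁻¹' s = s) (g : EuclideanSpace ℝ (Fin 3) → ℝ) :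
    ∫ x in s, g (toEuclideanLin A x) = ∫ x in s, g x := by
  have hmp := tet_measurePreserving_mat A B h1 h2 hdet
  have key := MeasureTheory.setIntegral_map_equiv
    (μ := (volume : Measure (EuclideanSpace ℝ (Fin 3)))) (tetMatMeasEquiv A B h1 h2) g s
  rw [hmp.map_eq] at key
  have he : (⇑(tetMatMeasEquiv A B h1 h2)) = ⇑(toEuclideanLin A) := rfl
  rw [he, hs] at key
  exact key.symm

/-! ### The generators act on the tetrahedron -/

lemma tet_coordR₁ (x : E3) : toEuclideanLin tetR₁ x 0 = x 1 ∧ toEuclideanLin tetR₁ x 1 = x 2 ∧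
    toEuclideanLin tetR₁ x 2 = x 0 := by
  refine ⟨?_, ?_, ?_⟩ <;>
    simp [tetR₁, Matrix.toEuclideanLin_apply, Matrix.mulVec, dotProduct, Matrix.vecHead, Matrix.vecTail,
      Fin.sum_univ_three]

lemma tet_coordR₂ (x : E3) : toEuclideanLin tetR₂ x 0 = -x 0 ∧ toEuclideanLin tetR₂ x 1 = x 1 ∧
    toEuclideanLin tetR₂ x 2 = -x 2 := by
  refine ⟨?_, ?_, ?_⟩ <;>
    simp [tetR₂, Matrix.toEuclideanLin_apply, Matrix.mulVec, dotProduct, Matrix.vecHead, Matrix.vecTail,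
      Fin.sum_univ_three]

lemma tet_preim_R₁ : (⇑(toEuclideanLin tetR₁)) ⁻¹' tetT = tetT := by
  rw [tetT_eq]
  ext x
  obtain ⟨c0, c1, c2⟩ := tet_coordR₁ x
  simp only [tetTdesc, Set.mem_preimage, Set.mem_setOf_eq, c0, c1, c2]
  constructor <;> rintro ⟨u1, u2, u3, u4⟩ <;>
    exact ⟨by linarith, by linarith, by linarith, by linarith⟩

lemma tet_preim_R₂ : (⇑(toEuclideanLin tetR₂)) ⁻¹' tetT = tetT := by
  rw [tetT_eq]
  ext x
  obtain ⟨c0, c1, c2⟩ := tet_coordR₂ x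
  simp only [tetTdesc, Set.mem_preimage, Set.mem_setOf_eq, c0, c1, c2]
  constructor <;> rintro ⟨u1, u2, u3, u4⟩ <;>
    exact ⟨by linarith, by linarith, by linarith, by linarith⟩

lemma tetR₁_mul_sq : tetR₁ * tetR₁ ^ 2 = 1 := by
  ext i j
  fin_cases i <;> fin_cases j <;>
    norm_num [tetR₁, pow_two, Matrix.mul_fin_three, Matrix.one_apply, Fin.ext_iff]

lemma tetR₁_sq_mul : tetR₁ ^ 2 * tetR₁ = 1 := by
  ext i j
  fin_cases i <;> fin_cases j <;>
    norm_num [tetR₁, pow_two, Matrix.mul_fin_three, Matrix.one_apply, Fin.ext_iff]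

lemma tetR₂_mul_self : tetR₂ * tetR₂ = 1 := by
  ext i j
  fin_cases i <;> fin_cases j <;>
    norm_num [tetR₂, Matrix.mul_fin_three, Matrix.one_apply, Fin.ext_iff]

lemma tetR₁_det : |tetR₁.det| = 1 := by
  norm_num [tetR₁, Matrix.det_fin_three, Matrix.cons_val_two]

lemma tetR₂_det : |tetR₂.det| = 1 := by
  norm_num [tetR₂, Matrix.det_fin_three, Matrix.cons_val_two]

lemma tet_rot₁ (g : E3 → ℝ) :
    ∫ x in tetT, g (toEuclideanLin tetR₁ x) = ∫ x in tetT, g x :=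
  tet_setIntegral_mat tetR₁ (tetR₁ ^ 2) tetR₁_mul_sq tetR₁_sq_mul tetR₁_det tetT tet_preim_R₁ g

lemma tet_rot₂ (g : E3 → ℝ) :
    ∫ x in tetT, g (toEuclideanLin tetR₂ x) = ∫ x in tetT, g x :=
  tet_setIntegral_mat tetR₂ tetR₂ tetR₂_mul_self tetR₂_mul_self tetR₂_det tetT tet_preim_R₂ g

lemma tet_toEuc_mul (A B : Matrix (Fin 3) (Fin 3) ℝ) (x : E3) :
    toEuclideanLin (A * B) x = toEuclideanLin A (toEuclideanLin B x) := by
  have h := Matrix.toLin_mul (PiLp.basisFun 2 ℝ (Fin 3)) (PiLp.basisFun 2 ℝ (Fin 3))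
    (PiLp.basisFun 2 ℝ (Fin 3)) A B
  simpa [toEuclideanLin_eq_toLin] using LinearMap.congr_fun h x

lemma tet_toEuc_one (x : E3) : toEuclideanLin (1 : Matrix (Fin 3) (Fin 3) ℝ) x = x := by
  simp [toEuclideanLin_eq_toLin]

lemma tet_rot_mul {A B : Matrix (Fin 3) (Fin 3) ℝ}
    (hA : ∀ g : E3 → ℝ, ∫ x in tetT, g (toEuclideanLin A x) = ∫ x in tetT, g x)
    (hB : ∀ g : E3 → ℝ, ∫ x in tetT, g (toEuclideanLin B x) = ∫ x in tetT, g x) :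
    ∀ g : E3 → ℝ, ∫ x in tetT, g (toEuclideanLin (A * B) x) = ∫ x in tetT, g x := by
  intro g
  simp_rw [tet_toEuc_mul]
  exact (hB (fun y => g (toEuclideanLin A y))).trans (hA g)

lemma tet_rot_one : ∀ g : E3 → ℝ,
    ∫ x in tetT, g (toEuclideanLin (1 : Matrix (Fin 3) (Fin 3) ℝ) x) = ∫ x in tetT, g x := by
  intro g; simp_rw [tet_toEuc_one]

lemma tet_rot_sq : ∀ g : E3 → ℝ,
    ∫ x in tetT, g (toEuclideanLin (tetR₁ ^ 2) x) = ∫ x in tetT, g x := by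
  rw [pow_two]; exact tet_rot_mul tet_rot₁ tet_rot₁

lemma tet_rot (g : E3 → ℝ) (i : Fin 12) :
    ∫ x in tetT, g (toEuclideanLin (tetG i) x) = ∫ x in tetT, g x := by
  fin_cases i
  · exact tet_rot_one g
  · exact tet_rot₁ g
  · exact tet_rot_sq g
  · exact tet_rot₂ g
  · exact tet_rot_mul tet_rot₁ tet_rot₂ g
  · exact tet_rot_mul tet_rot₂ tet_rot₁ g
  · exact tet_rot_mul tet_rot_sq tet_rot₂ g
  · exact tet_rot_mul tet_rot₂ tet_rot_sq g
  · exact tet_rot_mul (tet_rot_mul tet_rot₁ tet_rot₂) tet_rot_sq g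
  · exact tet_rot_mul (tet_rot_mul tet_rot_sq tet_rot₂) tet_rot₁ g
  · exact tet_rot_mul (tet_rot_mul tet_rot₂ tet_rot₁) tet_rot₂ g
  · exact tet_rot_mul (tet_rot_mul tet_rot₂ tet_rot_sq) tet_rot₂ g

lemma tet_mapsTo₁ : Set.MapsTo (⇑(toEuclideanLin tetR₁)) tetT tetT := fun x hx => by
  rw [← tet_preim_R₁] at hx; exact hx

lemma tet_mapsTo₂ : Set.MapsTo (⇑(toEuclideanLin tetR₂)) tetT tetT := fun x hx => by
  rw [← tet_preim_R₂] at hx; exact hx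

lemma tet_mapsTo_mul {A B : Matrix (Fin 3) (Fin 3) ℝ}
    (hA : Set.MapsTo (⇑(toEuclideanLin A)) tetT tetT)
    (hB : Set.MapsTo (⇑(toEuclideanLin B)) tetT tetT) :
    Set.MapsTo (⇑(toEuclideanLin (A * B))) tetT tetT := fun x hx => by
  rw [tet_toEuc_mul]; exact hA (hB hx)

lemma tet_mapsTo_one : Set.MapsTo (⇑(toEuclideanLin (1 : Matrix (Fin 3) (Fin 3) ℝ))) tetT tetT :=
  fun x hx => by rw [tet_toEuc_one]; exact hx

lemma tet_mapsTo_sq : Set.MapsTo (⇑(toEuclideanLin (tetR₁ ^ 2))) tetT tetT := by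
  rw [pow_two]; exact tet_mapsTo_mul tet_mapsTo₁ tet_mapsTo₁

lemma tet_mapsTo (i : Fin 12) : Set.MapsTo (⇑(toEuclideanLin (tetG i))) tetT tetT := by
  fin_cases i
  · exact tet_mapsTo_one
  · exact tet_mapsTo₁
  · exact tet_mapsTo_sq
  · exact tet_mapsTo₂
  · exact tet_mapsTo_mul tet_mapsTo₁ tet_mapsTo₂
  · exact tet_mapsTo_mul tet_mapsTo₂ tet_mapsTo₁
  · exact tet_mapsTo_mul tet_mapsTo_sq tet_mapsTo₂
  · exact tet_mapsTo_mul tet_mapsTo₂ tet_mapsTo_sq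
  · exact tet_mapsTo_mul (tet_mapsTo_mul tet_mapsTo₁ tet_mapsTo₂) tet_mapsTo_sq
  · exact tet_mapsTo_mul (tet_mapsTo_mul tet_mapsTo_sq tet_mapsTo₂) tet_mapsTo₁
  · exact tet_mapsTo_mul (tet_mapsTo_mul tet_mapsTo₂ tet_mapsTo₁) tet_mapsTo₂
  · exact tet_mapsTo_mul (tet_mapsTo_mul tet_mapsTo₂ tet_mapsTo_sq) tet_mapsTo₂


/-! ### Computation of the basic integrals via change of variables and Fubini -/

lemma tet_poly_int (a b c0 c1 c2 c3 c4 : ℝ) :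
    ∫ w in a..b, (c0 + c1*w + c2*w^2 + c3*w^3 + c4*w^4) =
      (c0*b + c1*b^2/2 + c2*b^3/3 + c3*b^4/4 + c4*b^5/5)
        - (c0*a + c1*a^2/2 + c2*a^3/3 + c3*a^4/4 + c4*a^5/5) := by
  have key : ∀ w : ℝ, HasDerivAt (fun w => c0*w + c1*w^2/2 + c2*w^3/3 + c3*w^4/4 + c4*w^5/5)
      (c0 + c1*w + c2*w^2 + c3*w^3 + c4*w^4) w := by
    intro w
    have h := (((((hasDerivAt_pow 1 w).const_mul c0).add
      ((hasDerivAt_pow 2 w).const_mul (c1/2))).add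
      ((hasDerivAt_pow 3 w).const_mul (c2/3))).add
      ((hasDerivAt_pow 4 w).const_mul (c3/4))).add
      ((hasDerivAt_pow 5 w).const_mul (c4/5))
    refine (h.congr_deriv ?_).congr_of_eventuallyEq (Filter.Eventually.of_forall fun x => ?_)
    · push_cast; ring
    · simp only [Pi.add_apply]; ring
  rw [intervalIntegral.integral_eq_sub_of_hasDerivAt (fun w _ => key w)
    ((Continuous.intervalIntegrable (by continuity) a b))]

def tetBox2 (s : ℝ) : Set (ℝ × ℝ) := {q | 0 ≤ q.1 ∧ 0 ≤ q.2 ∧ q.1 + q.2 ≤ s}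
def tetBox3 : Set (ℝ × ℝ × ℝ) := {p | 0 ≤ p.1 ∧ 0 ≤ p.2.1 ∧ 0 ≤ p.2.2 ∧ p.1 + p.2.1 + p.2.2 ≤ 4}

lemma tetBox2_meas (s : ℝ) : MeasurableSet (tetBox2 s) := by
  apply MeasurableSet.inter (measurableSet_le measurable_const measurable_fst)
  exact MeasurableSet.inter (measurableSet_le measurable_const measurable_snd)
    (measurableSet_le (measurable_fst.add measurable_snd) measurable_const)

lemma tetBox2_compact (s : ℝ) : IsCompact (tetBox2 s) := by
  refine IsCompact.of_isClosed_subset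
    ((isCompact_Icc (a := (0:ℝ)) (b := s)).prod (isCompact_Icc (a := (0:ℝ)) (b := s))) ?_ ?_
  · refine IsClosed.inter (isClosed_le continuous_const continuous_fst) <|
      IsClosed.inter (isClosed_le continuous_const continuous_snd)
        (isClosed_le (continuous_fst.add continuous_snd) continuous_const)
  · rintro ⟨b, c⟩ ⟨h1, h2, h3⟩
    exact ⟨⟨h1, by linarith⟩, ⟨h2, by linarith⟩⟩

lemma tet_integral_box2 (s : ℝ) (hs : 0 ≤ s) (G : ℝ × ℝ → ℝ) (hG : Continuous G) :
    ∫ q in tetBox2 s, G q = ∫ b in (0:ℝ)..s, ∫ c in (0:ℝ)..(s-b), G (b, c) := by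
  have hInt : IntegrableOn G (tetBox2 s) := hG.continuousOn.integrableOn_compact (tetBox2_compact s)
  rw [← integral_indicator (tetBox2_meas s), Measure.volume_eq_prod, MeasureTheory.integral_prod]
  swap
  · rw [← Measure.volume_eq_prod]
    exact (integrable_indicator_iff (tetBox2_meas s)).2 hInt
  have step : ∀ b : ℝ, (∫ c, (tetBox2 s).indicator G (b, c)) =
      (Icc (0:ℝ) s).indicator (fun b => ∫ c in (0:ℝ)..(s-b), G (b, c)) b := by
    intro b
    by_cases hb : b ∈ Icc (0:ℝ) s
    · rw [indicator_of_mem hb]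
      obtain ⟨hb0, hbs⟩ := mem_Icc.1 hb
      have key : ∀ c, (tetBox2 s).indicator G (b, c)
          = (Icc (0:ℝ) (s-b)).indicator (fun c => G (b, c)) c := by
        intro c
        by_cases hc : c ∈ Icc (0:ℝ) (s-b)
        · rw [indicator_of_mem hc, indicator_of_mem]
          obtain ⟨hc0, hcs⟩ := mem_Icc.1 hc
          exact ⟨hb0, hc0, by linarith⟩
        · rw [indicator_of_notMem hc, indicator_of_notMem]
          intro hmem
          exact hc (mem_Icc.2 ⟨hmem.2.1, by linarith [hmem.2.2]⟩)
      simp_rw [key]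
      rw [integral_indicator measurableSet_Icc, integral_Icc_eq_integral_Ioc,
        ← intervalIntegral.integral_of_le (by linarith : (0:ℝ) ≤ s - b)]
    · rw [indicator_of_notMem hb]
      have key : ∀ c, (tetBox2 s).indicator G (b, c) = 0 := by
        intro c
        apply indicator_of_notMem
        intro hmem
        rw [mem_Icc, not_and_or, not_le, not_le] at hb
        obtain ⟨h1, h2, h3⟩ := hmem
        rcases hb with h | h
        · exact absurd h1 (by simpa using not_le.2 h)
        · simp only at h1 h2 h3; linarith
      simp_rw [key, integral_zero]
  simp_rw [step]
  rw [integral_indicator measurableSet_Icc, integral_Icc_eq_integral_Ioc,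
    ← intervalIntegral.integral_of_le hs]

lemma tetBox3_meas : MeasurableSet tetBox3 := by
  refine MeasurableSet.inter (measurableSet_le measurable_const measurable_fst) <|
    MeasurableSet.inter (measurableSet_le measurable_const (measurable_fst.comp measurable_snd)) <|
    MeasurableSet.inter (measurableSet_le measurable_const (measurable_snd.comp measurable_snd))
      (measurableSet_le ((measurable_fst.add (measurable_fst.comp measurable_snd)).add
        (measurable_snd.comp measurable_snd)) measurable_const)

lemma tetBox3_compact : IsCompact tetBox3 := by
  refine IsCompact.of_isClosed_subset
    ((isCompact_Icc (a := (0:ℝ)) (b := 4)).prod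
      ((isCompact_Icc (a := (0:ℝ)) (b := 4)).prod (isCompact_Icc (a := (0:ℝ)) (b := 4)))) ?_ ?_
  · refine IsClosed.inter (isClosed_le continuous_const continuous_fst) <|
      IsClosed.inter (isClosed_le continuous_const (continuous_fst.comp continuous_snd)) <|
      IsClosed.inter (isClosed_le continuous_const (continuous_snd.comp continuous_snd))
        (isClosed_le ((continuous_fst.add (continuous_fst.comp continuous_snd)).add
          (continuous_snd.comp continuous_snd)) continuous_const)
  · rintro ⟨a, b, c⟩ ⟨h1, h2, h3, h4⟩
    simp only at h1 h2 h3 h4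
    exact ⟨⟨h1, by linarith⟩, ⟨h2, by linarith⟩, ⟨h3, by linarith⟩⟩

lemma tet_integral_box3 (F : ℝ × ℝ × ℝ → ℝ) (hF : Continuous F) :
    ∫ p in tetBox3, F p
      = ∫ a in (0:ℝ)..4, ∫ b in (0:ℝ)..(4-a), ∫ c in (0:ℝ)..(4-a-b), F (a, (b, c)) := by
  have hInt : IntegrableOn F tetBox3 := hF.continuousOn.integrableOn_compact tetBox3_compact
  rw [← integral_indicator tetBox3_meas, Measure.volume_eq_prod, MeasureTheory.integral_prod]
  swap
  · rw [← Measure.volume_eq_prod]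
    exact (integrable_indicator_iff tetBox3_meas).2 hInt
  have step : ∀ a : ℝ, (∫ q : ℝ × ℝ, tetBox3.indicator F (a, q)) =
      (Icc (0:ℝ) 4).indicator
        (fun a => ∫ b in (0:ℝ)..(4-a), ∫ c in (0:ℝ)..(4-a-b), F (a, (b, c))) a := by
    intro a
    by_cases ha : a ∈ Icc (0:ℝ) 4
    · rw [indicator_of_mem ha]
      obtain ⟨ha0, ha4⟩ := mem_Icc.1 ha
      have key : ∀ q : ℝ × ℝ, tetBox3.indicator F (a, q)
          = (tetBox2 (4-a)).indicator (fun q => F (a, q)) q := by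
        intro q
        by_cases hq : q ∈ tetBox2 (4-a)
        · rw [indicator_of_mem hq]
          obtain ⟨h1, h2, h3⟩ := hq
          exact indicator_of_mem (show (a, q) ∈ tetBox3 from
            ⟨ha0, h1, h2, show a + q.1 + q.2 ≤ 4 by linarith⟩) F
        · rw [indicator_of_notMem hq]
          refine indicator_of_notMem (fun hmem => hq ⟨hmem.2.1, hmem.2.2.1, ?_⟩) F
          have := hmem.2.2.2; simp only at this ⊢; linarith
      simp_rw [key]
      rw [integral_indicator (tetBox2_meas _), tet_integral_box2 (4-a) (by linarith) _
        (by fun_prop)]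
    · rw [indicator_of_notMem ha]
      have key : ∀ q : ℝ × ℝ, tetBox3.indicator F (a, q) = 0 := by
        intro q
        apply indicator_of_notMem
        intro hmem
        rw [mem_Icc, not_and_or, not_le, not_le] at ha
        obtain ⟨h1, h2, h3, h4⟩ := hmem
        simp only at h1 h2 h3 h4
        rcases ha with h | h
        · linarith
        · linarith
      simp_rw [key, integral_zero]
  simp_rw [step]
  rw [integral_indicator measurableSet_Icc, integral_Icc_eq_integral_Ioc,
    ← intervalIntegral.integral_of_le (by norm_num : (0:ℝ) ≤ 4)]

/-! ### Transfer from `EuclideanSpace` to `ℝ × ℝ × ℝ` -/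

def tetTripleEquiv : EuclideanSpace ℝ (Fin 3) ≃ᵐ ℝ × ℝ × ℝ :=
  (MeasurableEquiv.toLp 2 (Fin 3 → ℝ)).symm.trans <|
    (MeasurableEquiv.piFinSuccAbove (fun _ : Fin 3 => ℝ) 0).trans <|
      (MeasurableEquiv.refl ℝ).prodCongr (MeasurableEquiv.finTwoArrow)

lemma tetTripleEquiv_apply (x : E3) : tetTripleEquiv x = (x 0, (x 1, x 2)) := rfl

lemma tetTripleEquiv_mp :
    MeasurePreserving tetTripleEquiv (volume : Measure (EuclideanSpace ℝ (Fin 3))) volume := by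
  refine (EuclideanSpace.volume_preserving_symm_measurableEquiv_toLp (Fin 3)).trans ?_
  exact (volume_preserving_piFinSuccAbove (fun _ : Fin 3 => ℝ) 0).trans
    ((MeasurePreserving.id _).prod (volume_preserving_finTwoArrow ℝ))

def tetΔ : Set (EuclideanSpace ℝ (Fin 3)) :=
  {t | 0 ≤ t 0 ∧ 0 ≤ t 1 ∧ 0 ≤ t 2 ∧ t 0 + t 1 + t 2 ≤ 4}

lemma tet_preimage_box3 : tetTripleEquiv ⁻¹' tetBox3 = tetΔ := rfl

lemma tet_setIntegral_delta (F : ℝ × ℝ × ℝ → ℝ) :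
    ∫ x in tetΔ, F (tetTripleEquiv x) = ∫ p in tetBox3, F p := by
  rw [← tet_preimage_box3]
  exact tetTripleEquiv_mp.setIntegral_preimage_emb tetTripleEquiv.measurableEmbedding F tetBox3

/-! ### The affine change of variables -/

def tetNaff : Matrix (Fin 3) (Fin 3) ℝ :=
  !![-(1/2), -(1/2), 0; -(1/2), 0, -(1/2); 0, -(1/2), -(1/2)]

def tetLc : EuclideanSpace ℝ (Fin 3) →L[ℝ] EuclideanSpace ℝ (Fin 3) :=
  LinearMap.toContinuousLinearMap (toEuclideanLin tetNaff)

def tetVone : EuclideanSpace ℝ (Fin 3) := (WithLp.equiv 2 _).symm ![1, 1, 1]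

def tetφ (t : EuclideanSpace ℝ (Fin 3)) : EuclideanSpace ℝ (Fin 3) := tetVone + tetLc t

lemma tetφ_apply (t : E3) :
    tetφ t 0 = 1 - t 0/2 - t 1/2 ∧ tetφ t 1 = 1 - t 0/2 - t 2/2
      ∧ tetφ t 2 = 1 - t 1/2 - t 2/2 := by
  refine ⟨?_, ?_, ?_⟩ <;>
    simp [tetφ, tetVone, tetLc, tetNaff, Matrix.toEuclideanLin_apply, Matrix.mulVec,
      dotProduct, Matrix.vecHead, Matrix.vecTail, Fin.sum_univ_three, PiLp.add_apply, WithLp.equiv_symm_apply,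
      EuclideanSpace] <;> ring

lemma tet_continuous_coord (i : Fin 3) : Continuous fun x : E3 => x i :=
  (EuclideanSpace.proj i).continuous

lemma tetΔ_meas : MeasurableSet tetΔ := by
  have h0 := tet_continuous_coord 0
  have h1 := tet_continuous_coord 1
  have h2 := tet_continuous_coord 2
  refine MeasurableSet.inter (measurableSet_le measurable_const h0.measurable) <|
    MeasurableSet.inter (measurableSet_le measurable_const h1.measurable) <|
    MeasurableSet.inter (measurableSet_le measurable_const h2.measurable)
      (measurableSet_le ((h0.add h1).add h2).measurable measurable_const)

lemma tetφ_image : tetφ '' tetΔ = tetTdesc := by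
  ext x
  constructor
  · rintro ⟨t, ⟨ht0, ht1, ht2, hts⟩, rfl⟩
    obtain ⟨e0, e1, e2⟩ := tetφ_apply t
    refine ⟨?_, ?_, ?_, ?_⟩ <;> rw [e0, e1, e2] <;> linarith
  · rintro ⟨h1, h2, h3, h4⟩
    set t : EuclideanSpace ℝ (Fin 3) := (WithLp.equiv 2 _).symm
      ![1 - (x 0 + x 1 - x 2), 1 - (x 0 - x 1 + x 2), 1 - (-x 0 + x 1 + x 2)] with htdef
    have ht0 : t 0 = 1 - (x 0 + x 1 - x 2) := rfl
    have ht1 : t 1 = 1 - (x 0 - x 1 + x 2) := rfl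
    have ht2 : t 2 = 1 - (-x 0 + x 1 + x 2) := rfl
    obtain ⟨e0, e1, e2⟩ := tetφ_apply t
    refine ⟨t, ⟨?_, ?_, ?_, ?_⟩, ?_⟩
    · rw [ht0]; linarith
    · rw [ht1]; linarith
    · rw [ht2]; linarith
    · rw [ht0, ht1, ht2]; linarith
    · ext j
      fin_cases j
      · show tetφ t 0 = x 0
        rw [e0, ht0, ht1]; ring
      · show tetφ t 1 = x 1
        rw [e1, ht0, ht2]; ring
      · show tetφ t 2 = x 2
        rw [e2, ht1, ht2]; ring

lemma tetφ_inj : Set.InjOn tetφ tetΔ := by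
  intro s _ t _ h
  obtain ⟨a0, a1, a2⟩ := tetφ_apply s
  obtain ⟨b0, b1, b2⟩ := tetφ_apply t
  have h0 : tetφ s 0 = tetφ t 0 := by rw [h]
  have h1 : tetφ s 1 = tetφ t 1 := by rw [h]
  have h2 : tetφ s 2 = tetφ t 2 := by rw [h]
  rw [a0, b0] at h0; rw [a1, b1] at h1; rw [a2, b2] at h2
  ext j
  fin_cases j
  · show s 0 = t 0; linarith
  · show s 1 = t 1; linarith
  · show s 2 = t 2; linarith

lemma tetLc_det : tetLc.det = 1/4 := by
  have h : tetLc.det = LinearMap.det (toEuclideanLin tetNaff) := rfl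
  rw [h, toEuclideanLin_eq_toLin, LinearMap.det_toLin]
  norm_num [tetNaff, Matrix.det_fin_three, Matrix.vecHead, Matrix.vecTail, Matrix.cons_val_two]

lemma tet_cov (g : EuclideanSpace ℝ (Fin 3) → ℝ) :
    ∫ x in tetTdesc, g x = ∫ t in tetΔ, (1/4 : ℝ) * g (tetφ t) := by
  have hf' : ∀ t ∈ tetΔ, HasFDerivWithinAt tetφ tetLc tetΔ t := fun t _ =>
    ((tetLc.hasFDerivAt).const_add tetVone).hasFDerivWithinAt
  have key := integral_image_eq_integral_abs_det_fderiv_smul volume tetΔ_meas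
    (f' := fun _ => tetLc) hf' tetφ_inj g
  rw [tetφ_image] at key
  rw [key]
  refine setIntegral_congr_fun tetΔ_meas fun t _ => ?_
  rw [tetLc_det]
  norm_num

/-! ### The two basic integrals over the tetrahedron -/

lemma tet_int_one : ∫ _x in tetT, (1:ℝ) = 8/3 := by
  rw [tetT_eq, tet_cov (fun _ => (1:ℝ))]
  have h : (∫ t in tetΔ, (1/4 : ℝ) * (fun _ => (1:ℝ)) (tetφ t))
      = ∫ t in tetΔ, (fun _ : ℝ × ℝ × ℝ => (1/4 : ℝ)) (tetTripleEquiv t) := by norm_num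
  rw [h, tet_setIntegral_delta (fun _ : ℝ × ℝ × ℝ => (1/4:ℝ)), tet_integral_box3 _ continuous_const]
  have inner : ∀ a b : ℝ, (∫ _c in (0:ℝ)..(4-a-b), (1/4:ℝ)) = (1/4) * (4 - a - b) := by
    intro a b; rw [intervalIntegral.integral_const]; simp [smul_eq_mul]; ring
  have mid : ∀ a : ℝ, (∫ b in (0:ℝ)..(4-a), (1/4:ℝ) * (4 - a - b)) = (4-a)^2/8 := by
    intro a
    rw [show (∫ b in (0:ℝ)..(4-a), (1/4:ℝ) * (4 - a - b))
        = ∫ b in (0:ℝ)..(4-a), ((1-a/4) + (-(1/4))*b + 0*b^2 + 0*b^3 + 0*b^4) from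
      intervalIntegral.integral_congr (fun w _ => by ring), tet_poly_int]
    ring
  simp_rw [inner, mid]
  rw [show (∫ a in (0:ℝ)..4, (4-a)^2/8)
      = ∫ a in (0:ℝ)..4, (2 + (-1)*a + (1/8)*a^2 + 0*a^3 + 0*a^4) from
    intervalIntegral.integral_congr (fun w _ => by ring), tet_poly_int]
  norm_num

lemma tet_int_x0 : ∫ x in tetT, (x 0)^2 = 8/15 := by
  rw [tetT_eq, tet_cov (fun x => (x 0)^2)]
  have h : (∫ t in tetΔ, (1/4 : ℝ) * (fun x : EuclideanSpace ℝ (Fin 3) => (x 0)^2) (tetφ t))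
      = ∫ t in tetΔ,
          (fun p : ℝ × ℝ × ℝ => (1/4:ℝ) * ((2 - p.1 - p.2.1)/2)^2) (tetTripleEquiv t) := by
    refine setIntegral_congr_fun tetΔ_meas fun t _ => ?_
    obtain ⟨e0, _, _⟩ := tetφ_apply t
    rw [tetTripleEquiv_apply]
    simp only [e0]
    ring
  rw [h, tet_setIntegral_delta (fun p : ℝ × ℝ × ℝ => (1/4:ℝ) * ((2 - p.1 - p.2.1)/2)^2),
    tet_integral_box3 _ (by fun_prop)]
  have inner : ∀ a b : ℝ, (∫ _c in (0:ℝ)..(4-a-b), (1/4:ℝ) * ((2 - a - b)/2)^2)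
      = (1/4) * ((2 - a - b)/2)^2 * (4 - a - b) := by
    intro a b; rw [intervalIntegral.integral_const]; simp [smul_eq_mul]; ring
  have mid : ∀ a : ℝ, (∫ b in (0:ℝ)..(4-a), (1/4:ℝ) * ((2 - a - b)/2)^2 * (4 - a - b))
      = 2/3 - a + (5/8)*a^2 - a^3/6 + a^4/64 := by
    intro a
    rw [show (∫ b in (0:ℝ)..(4-a), (1/4:ℝ) * ((2 - a - b)/2)^2 * (4 - a - b))
        = ∫ b in (0:ℝ)..(4-a), ((1 - (5/4)*a + a^2/2 - a^3/16)
            + (-(5/4) + a - (3/16)*a^2)*b + (1/2 - (3/16)*a)*b^2 + (-(1/16))*b^3 + 0*b^4) from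
      intervalIntegral.integral_congr (fun w _ => by ring), tet_poly_int]
    ring
  simp_rw [inner, mid]
  rw [show (∫ a in (0:ℝ)..4, (2/3 - a + (5/8)*a^2 - a^3/6 + a^4/64))
      = ∫ a in (0:ℝ)..4, (2/3 + (-1)*a + (5/8)*a^2 + (-(1/6))*a^3 + (1/64)*a^4) from
    intervalIntegral.integral_congr (fun w _ => by ring), tet_poly_int]
  norm_num

lemma tet_norm_sq (x : EuclideanSpace ℝ (Fin 3)) :
    ‖x‖^2 = (x 0)^2 + (x 1)^2 + (x 2)^2 := by
  rw [EuclideanSpace.norm_eq, Real.sq_sqrt (by positivity)]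
  simp [Fin.sum_univ_three, sq_abs, Real.norm_eq_abs]

lemma tet_int_x1 : ∫ x in tetT, (x 1)^2 = 8/15 := by
  have key := tet_rot (fun y => (y 0)^2) 1
  have h : ∀ x : EuclideanSpace ℝ (Fin 3),
      (toEuclideanLin (tetG 1) x 0)^2 = (x 1)^2 := fun x =>
    congrArg (· ^ 2) ((tet_coordR₁ x).1 : toEuclideanLin tetR₁ x 0 = x 1)
  simp_rw [h] at key
  rw [key, tet_int_x0]

lemma tet_int_x2 : ∫ x in tetT, (x 2)^2 = 8/15 := by
  have key := tet_rot (fun y => (y 0)^2) 2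
  have h : ∀ x : EuclideanSpace ℝ (Fin 3),
      (toEuclideanLin (tetG 2) x 0)^2 = (x 2)^2 := by
    intro x
    have e : toEuclideanLin (tetR₁ ^ 2) x 0 = x 2 := by
      rw [pow_two, tet_toEuc_mul, (tet_coordR₁ _).1, (tet_coordR₁ x).2.1]
    exact congrArg (· ^ 2) e
  simp_rw [h] at key
  rw [key, tet_int_x0]

lemma tet_int_normsq : ∫ x in tetT, ‖x‖^2 = 8/5 := by
  have i0 : IntegrableOn (fun x : EuclideanSpace ℝ (Fin 3) => (x 0)^2) tetT :=
    (((tet_continuous_coord 0).pow 2).continuousOn).integrableOn_compact tetT_compact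
  have i1 : IntegrableOn (fun x : EuclideanSpace ℝ (Fin 3) => (x 1)^2) tetT :=
    (((tet_continuous_coord 1).pow 2).continuousOn).integrableOn_compact tetT_compact
  have i2 : IntegrableOn (fun x : EuclideanSpace ℝ (Fin 3) => (x 2)^2) tetT :=
    (((tet_continuous_coord 2).pow 2).continuousOn).integrableOn_compact tetT_compact
  have h : (∫ x in tetT, ‖x‖^2) = ∫ x in tetT, ((x 0)^2 + (x 1)^2 + (x 2)^2) := by
    refine setIntegral_congr_fun tetT_meas fun x _ => tet_norm_sq x
  have i01 : IntegrableOn (fun x : EuclideanSpace ℝ (Fin 3) => (x 0)^2 + (x 1)^2) tetT :=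
    i0.add i1
  rw [h, integral_add i01 i2, integral_add i0 i1, tet_int_x0, tet_int_x1, tet_int_x2]
  norm_num

end

end Aux

/-- `P(x) = (5/8)|x|²` is a probability density on the tetrahedron
`T`, and the rule `P₂^tet` with `x` sampled from `P` is unbiased: for every continuous
`f : cl T → ℝ`, `∫_T Q(f;x) P(x) dx = ∫_T f`. -/
theorem stmt_13 :
    (∫ x in tetT, tetP x) = 1 ∧
    ∀ f : EuclideanSpace ℝ (Fin 3) → ℝ, ContinuousOn f (closure tetT) →
      ∫ x in tetT, tetQ2 f x * tetP x = ∫ y in tetT, f y := by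
  constructor
  · have h : (∫ x in tetT, tetP x) = (5/8 : ℝ) * ∫ x in tetT, ‖x‖^2 := by
      simp_rw [tetP]
      rw [integral_const_mul]
    rw [h, tet_int_normsq]
    norm_num
  · intro f hf
    have hfT : ContinuousOn f tetT := by rwa [closure_tetT] at hf
    have hIg : ∀ i : Fin 12, IntegrableOn
        (fun x => f (Matrix.toEuclideanLin (tetG i) x)) tetT := by
      intro i
      have hc : Continuous (⇑(Matrix.toEuclideanLin (tetG i))) :=
        LinearMap.continuous_of_finiteDimensional _
      exact (hfT.comp hc.continuousOn (tet_mapsTo i)).integrableOn_compact tetT_compact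
    have hSsum : IntegrableOn (fun x => ∑ i : Fin 12,
        f (Matrix.toEuclideanLin (tetG i) x)) tetT :=
      integrable_finset_sum _ (fun i _ => hIg i)
    have hS : IntegrableOn (fun x => (1/12 : ℝ) * ∑ i : Fin 12,
        f (Matrix.toEuclideanLin (tetG i) x)) tetT := hSsum.const_mul _
    have hnorm2 : IntegrableOn (fun x : EuclideanSpace ℝ (Fin 3) => ‖x‖^2) tetT :=
      ((continuous_norm.pow 2)).continuousOn.integrableOn_compact tetT_compact
    have hBa : IntegrableOn (fun x : EuclideanSpace ℝ (Fin 3) =>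
        (5/3 * f 0) * ‖x‖^2) tetT := hnorm2.const_mul _
    have hBb : IntegrableOn (fun _x : EuclideanSpace ℝ (Fin 3) => f 0) tetT :=
      integrableOn_const tetT_compact.measure_lt_top.ne
    have hB : IntegrableOn (fun x : EuclideanSpace ℝ (Fin 3) =>
        (5/3 * f 0) * ‖x‖^2 - f 0) tetT := hBa.sub hBb
    have hvol : (volume tetT).toReal = 8/3 := by
      have h1 := tet_int_one
      rwa [setIntegral_const, smul_eq_mul, mul_one] at h1
    have hconst : (∫ _x in tetT, f 0) = 8/3 * f 0 := by
      rw [setIntegral_const, measureReal_def, hvol, smul_eq_mul]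
    have hpt : ∀ x : EuclideanSpace ℝ (Fin 3), tetQ2 f x * tetP x
        = (1/12 : ℝ) * (∑ i : Fin 12, f (Matrix.toEuclideanLin (tetG i) x))
          + ((5/3 * f 0) * ‖x‖^2 - f 0) := by
      intro x
      by_cases hx : ‖x‖ = 0
      · have hx0 : x = 0 := norm_eq_zero.1 hx
        subst hx0
        have hz : (∑ i : Fin 12, f (Matrix.toEuclideanLin (tetG i)
            (0 : EuclideanSpace ℝ (Fin 3)))) = 12 * f 0 := by
          have : ∀ i : Fin 12, f (Matrix.toEuclideanLin (tetG i)
              (0 : EuclideanSpace ℝ (Fin 3))) = f 0 := fun i => by rw [map_zero]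
          simp [this]
        rw [tetQ2, tetP, hz]
        simp
      · have hx2 : ‖x‖^2 ≠ 0 := pow_ne_zero _ hx
        rw [tetQ2, tetP]
        field_simp
        ring
    calc ∫ x in tetT, tetQ2 f x * tetP x
        = ∫ x in tetT, ((1/12 : ℝ) * (∑ i : Fin 12, f (Matrix.toEuclideanLin (tetG i) x))
            + ((5/3 * f 0) * ‖x‖^2 - f 0)) :=
          setIntegral_congr_fun tetT_meas fun x _ => hpt x
      _ = (1/12 : ℝ) * (∑ i : Fin 12, ∫ x in tetT, f (Matrix.toEuclideanLin (tetG i) x))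
            + ((5/3 * f 0) * (∫ x in tetT, ‖x‖^2) - ∫ _x in tetT, f 0) := by
          rw [integral_add hS hB, integral_sub hBa hBb, integral_const_mul,
            integral_finset_sum _ (fun i _ => hIg i), integral_const_mul]
      _ = ∫ y in tetT, f y := by
          have hrot : ∀ i : Fin 12, (∫ x in tetT, f (Matrix.toEuclideanLin (tetG i) x))
              = ∫ y in tetT, f y := fun i => tet_rot f i
          simp_rw [hrot, Finset.sum_const, Finset.card_univ, Fintype.card_fin, nsmul_eq_mul,
            tet_int_normsq, hconst]
          push_cast
          ring
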